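/- Let G be the presented group on generators β, β′, γ, γ′, δ, δ′ with the relations R₃ together with the additional relation δ = γ. Then G is abelian. -/

import Mathlib

/-- The relations of the reduced braid group `B̄₃`:
`σ₁σ₂σ₁ = σ₂σ₁σ₂` and `(σ₁σ₂)³ = 1`. -/
def bbar3Rels : Set (FreeGroup (Fin 2)) :=
  { FreeGroup.of 0 * FreeGroup.of 1 * FreeGroup.of 0 *
      (FreeGroup.of 1 * FreeGroup.of 0 * FreeGroup.of 1)⁻¹,
    (FreeGroup.of 0 * FreeGroup.of 1) ^ 3 }

/-- The reduced braid group `B̄₃ = ⟨σ₁, σ₂ ∣ σ₁σ₂σ₁ = σ₂σ₁σ₂, (σ₁σ₂)³ = 1⟩`. -/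
abbrev Bbar3 : Type := PresentedGroup bbar3Rels

/-- The generator `σ₁` of `B̄₃`. -/
def σ1 : Bbar3 := PresentedGroup.of 0

/-- The generator `σ₂` of `B̄₃`. -/
def σ2 : Bbar3 := PresentedGroup.of 1

namespace Stmt

def b : FreeGroup (Fin 6) := FreeGroup.of 0
def b' : FreeGroup (Fin 6) := FreeGroup.of 1
def c : FreeGroup (Fin 6) := FreeGroup.of 2
def c' : FreeGroup (Fin 6) := FreeGroup.of 3
def d : FreeGroup (Fin 6) := FreeGroup.of 4
def d' : FreeGroup (Fin 6) := FreeGroup.of 5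

/-- The set of relators. -/
def rels : Set (FreeGroup (Fin 6)) :=
  { d' * b * b' * b * (d * b' * b * b')⁻¹,
    d' * b * (b * d)⁻¹,
    d * b' * (b' * d')⁻¹,
    (b * b' * d') * c' * (b * b' * d')⁻¹ * ((b' * b * d) * c * (b' * b * d)⁻¹)⁻¹,
    (c * d) ^ 3 * ((d * c) ^ 3)⁻¹,
    (c' * d') ^ 3 * ((d' * c') ^ 3)⁻¹,
    b * ((d * c * d) * c * (d * c * d)⁻¹)⁻¹,
    b' * ((d' * c' * d') * c' * (d' * c' * d')⁻¹)⁻¹,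
    (b * d * c) * d * (b * d * c)⁻¹ * ((b' * d' * c') * d' * (b' * d' * c')⁻¹)⁻¹,
    b' * d' * c' * b * d * c,
    d * c⁻¹ }

end Stmt

/-- Adding the relation `δ = γ` to the relations R₃, the resulting group is abelian. -/
theorem stmt10 : ∀ x y : PresentedGroup Stmt.rels, x * y = y * x := by
  let f : FreeGroup (Fin 6) →* PresentedGroup Stmt.rels :=
    QuotientGroup.mk' (Subgroup.normalClosure Stmt.rels)
  have hr : ∀ r ∈ Stmt.rels, f r = 1 := fun r h =>
    (QuotientGroup.eq_one_iff r).mpr (Subgroup.subset_normalClosure h)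
  set B := f Stmt.b with hBdef
  set B' := f Stmt.b' with hB'def
  set C := f Stmt.c with hCdef
  set C' := f Stmt.c' with hC'def
  set D := f Stmt.d with hDdef
  set D' := f Stmt.d' with hD'def
  have h1 : D' * B * B' * B * (D * B' * B * B')⁻¹ = 1 := by
    have := hr _ (show Stmt.d' * Stmt.b * Stmt.b' * Stmt.b * (Stmt.d * Stmt.b' * Stmt.b * Stmt.b')⁻¹ ∈ Stmt.rels from Set.mem_insert _ _)
    simpa [map_mul, map_inv] using this
  have h2 : D' * B * (B * D)⁻¹ = 1 := by
    have := hr _ (show Stmt.d' * Stmt.b * (Stmt.b * Stmt.d)⁻¹ ∈ Stmt.rels from Set.mem_insert_of_mem _ (Set.mem_insert _ _))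
    simpa [map_mul, map_inv] using this
  have h3 : D * B' * (B' * D')⁻¹ = 1 := by
    have := hr _ (show Stmt.d * Stmt.b' * (Stmt.b' * Stmt.d')⁻¹ ∈ Stmt.rels from Set.mem_insert_of_mem _ (Set.mem_insert_of_mem _ (Set.mem_insert _ _)))
    simpa [map_mul, map_inv] using this
  have h7 : B * ((D * C * D) * C * (D * C * D)⁻¹)⁻¹ = 1 := by
    have := hr _ (show Stmt.b * ((Stmt.d * Stmt.c * Stmt.d) * Stmt.c * (Stmt.d * Stmt.c * Stmt.d)⁻¹)⁻¹ ∈ Stmt.rels from Set.mem_insert_of_mem _ (Set.mem_insert_of_mem _ (Set.mem_insert_of_mem _ (Set.mem_insert_of_mem _ (Set.mem_insert_of_mem _ (Set.mem_insert_of_mem _ (Set.mem_insert _ _)))))))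
    simpa [map_mul, map_inv] using this
  have h10 : B' * D' * C' * B * D * C = 1 := by
    have := hr _ (show Stmt.b' * Stmt.d' * Stmt.c' * Stmt.b * Stmt.d * Stmt.c ∈ Stmt.rels from Set.mem_insert_of_mem _ (Set.mem_insert_of_mem _ (Set.mem_insert_of_mem _ (Set.mem_insert_of_mem _ (Set.mem_insert_of_mem _ (Set.mem_insert_of_mem _ (Set.mem_insert_of_mem _ (Set.mem_insert_of_mem _ (Set.mem_insert_of_mem _ (Set.mem_insert _ _))))))))))
    simpa [map_mul, map_inv] using this
  have h11 : D * C⁻¹ = 1 := by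
    have := hr _ (show Stmt.d * Stmt.c⁻¹ ∈ Stmt.rels from Set.mem_insert_of_mem _ (Set.mem_insert_of_mem _ (Set.mem_insert_of_mem _ (Set.mem_insert_of_mem _ (Set.mem_insert_of_mem _ (Set.mem_insert_of_mem _ (Set.mem_insert_of_mem _ (Set.mem_insert_of_mem _ (Set.mem_insert_of_mem _ (Set.mem_insert_of_mem _ (Set.mem_singleton _)))))))))))
    simpa [map_mul, map_inv] using this
  -- D = C
  have hD : D = C := by
    exact mul_inv_eq_one.mp h11
  -- B = C
  have hB : B = C := by
    have h7' : B = (D * C * D) * C * (D * C * D)⁻¹ := mul_inv_eq_one.mp h7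
    rw [hD] at h7'; rw [h7']; group
  -- D' = C
  have hD' : D' = C := by
    have h2' : D' * B = B * D := mul_inv_eq_one.mp h2
    rw [hB, hD] at h2'
    exact mul_right_cancel h2'
  -- C and B' commute
  have hcomm : C * B' = B' * C := by
    have h3' : D * B' = B' * D' := mul_inv_eq_one.mp h3
    rwa [hD, hD'] at h3'
  -- B' = C
  have hB' : B' = C := by
    have h1' : D' * B * B' * B = D * B' * B * B' := mul_inv_eq_one.mp h1
    rw [hB, hD, hD'] at h1'
    -- h1' : C * C * B' * C = C * B' * C * B'
    have e2 : C * (B' * C) = B' * (C * B') :=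
      mul_left_cancel (show C * (C * (B' * C)) = C * (B' * (C * B')) by
        simpa [mul_assoc] using h1')
    have l1 : B' * (C * C) = C * (B' * C) := by
      rw [← mul_assoc, ← mul_assoc, hcomm]
    have l2 : B' * (C * B') = B' * (B' * C) := by rw [hcomm]
    have e6 : C * C = B' * C := mul_left_cancel ((l1.trans e2).trans l2)
    exact (mul_right_cancel e6).symm
  -- C' = C ^ (-5)
  have hC' : C' = C ^ (-5 : ℤ) := by
    have key : C' = (C * C)⁻¹ * (C * C * C' * C * C * C) * (C * C * C)⁻¹ := by group
    rw [hB', hD', hB, hD] at h10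
    rw [h10] at key
    rw [key]; group
  -- every element is a power of C
  have main : ∀ x : PresentedGroup Stmt.rels, ∃ n : ℤ, x = C ^ n := by
    intro x
    induction x using QuotientGroup.induction_on with
    | H w =>
      induction w using FreeGroup.induction_on with
      | C1 => exact ⟨0, by simp; rfl⟩
      | of i =>
        fin_cases i
        · exact ⟨1, show B = C ^ 1 by rw [hB, zpow_one]⟩
        · exact ⟨1, show B' = C ^ 1 by rw [hB', zpow_one]⟩
        · exact ⟨1, show C = C ^ 1 by rw [zpow_one]⟩
        · exact ⟨-5, show C' = C ^ (-5 : ℤ) from hC'⟩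
        · exact ⟨1, show D = C ^ 1 by rw [hD, zpow_one]⟩
        · exact ⟨1, show D' = C ^ 1 by rw [hD', zpow_one]⟩
      | inv_of i ih =>
        obtain ⟨n, hn⟩ := ih
        have hn' : (QuotientGroup.mk (FreeGroup.of i) :
            PresentedGroup Stmt.rels) = C ^ n := hn
        refine ⟨-n, ?_⟩
        show (QuotientGroup.mk (FreeGroup.of i) : PresentedGroup Stmt.rels)⁻¹ = C ^ (-n)
        rw [hn', zpow_neg]; rfl
      | mul u v ihu ihv =>
        obtain ⟨m, hm⟩ := ihu
        obtain ⟨n, hn⟩ := ihv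
        refine ⟨m + n, ?_⟩
        show (QuotientGroup.mk u : PresentedGroup Stmt.rels) * QuotientGroup.mk v = C ^ (m + n)
        rw [hm, hn, zpow_add]; rfl
  intro x y
  obtain ⟨m, hm⟩ := main x
  obtain ⟨n, hn⟩ := main y
  rw [hm, hn]
  exact ((Commute.refl C).zpow_zpow m n).eq
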